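/- Consider the one-dimensional problem: u ∈ C²([0,1]), u > 0 on [0,1], −u'' = 0 on (0,1), −u'(0) = λ r₀ u(0)(1−u(0)), u'(1) = λ r₁ u(1)(1−u(1)), with λ > 0 and r₀ < 0 < r₁. Then there is no solution u satisfying min(u(0), u(1)) < 1 < max(u(0), u(1)). -/
import Mathlib


/-- One-dimensional problem: there is no positive solution `u ∈ C²([0,1])` of
`−u'' = 0` on `(0,1)`, `−u'(0) = λr₀u(0)(1−u(0))`, `u'(1) = λr₁u(1)(1−u(1))` with
`λ > 0`, `r₀ < 0 < r₁`, whose boundary values straddle `1`. -/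
theorem stmt14 (lam r0 r1 : ℝ) (hlam : 0 < lam) (hr0 : r0 < 0) (hr1 : 0 < r1) :
    ¬ ∃ u : ℝ → ℝ,
      ContDiffOn ℝ 2 u (Set.Icc 0 1) ∧
      (∀ x ∈ Set.Icc (0 : ℝ) 1, 0 < u x) ∧
      (∀ x ∈ Set.Ioo (0 : ℝ) 1,
        derivWithin (fun y => derivWithin u (Set.Icc 0 1) y) (Set.Icc 0 1) x = 0) ∧
      (-derivWithin u (Set.Icc 0 1) 0 = lam * r0 * u 0 * (1 - u 0)) ∧
      (derivWithin u (Set.Icc 0 1) 1 = lam * r1 * u 1 * (1 - u 1)) ∧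
      (min (u 0) (u 1) < 1 ∧ 1 < max (u 0) (u 1)) := by
  rintro ⟨u, hu, hpos, hsec, hb0, hb1, hmin, hmax⟩
  set g : ℝ → ℝ := derivWithin u (Set.Icc 0 1) with hg
  have hud : UniqueDiffOn ℝ (Set.Icc (0:ℝ) 1) := uniqueDiffOn_Icc (by norm_num)
  have hg1 : ContDiffOn ℝ 1 g (Set.Icc 0 1) :=
    hu.derivWithin hud (by norm_num)
  have hgc : ContinuousOn g (Set.Icc 0 1) := hg1.continuousOn
  have hgd : DifferentiableOn ℝ g (Set.Icc 0 1) :=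
    hg1.differentiableOn (by norm_num)
  -- g has derivative 0 at every interior point
  have hderiv : ∀ x ∈ Set.Ioo (0:ℝ) 1, HasDerivAt g 0 x := by
    intro x hx
    have hnhds : Set.Icc (0:ℝ) 1 ∈ nhds x :=
      Icc_mem_nhds hx.1 hx.2
    have hdx : DifferentiableAt ℝ g x :=
      (hgd x (Set.Ioo_subset_Icc_self hx)).differentiableAt hnhds
    have h0 : deriv g x = 0 := by
      rw [← derivWithin_of_mem_nhds hnhds]
      exact hsec x hx
    exact h0 ▸ hdx.hasDerivAt
  -- g is constant on Ioo 0 1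
  have hconst : ∀ x ∈ Set.Ioo (0:ℝ) 1, ∀ y ∈ Set.Ioo (0:ℝ) 1, x ≤ y → g y = g x := by
    intro x hx y hy hxy
    have := constant_of_has_deriv_right_zero
      (f := g) (a := x) (b := y)
      (hgc.mono (Set.Icc_subset_Icc hx.1.le hy.2.le))
      (fun t ht => by
        have htI : t ∈ Set.Ioo (0:ℝ) 1 := ⟨lt_of_lt_of_le hx.1 ht.1, lt_of_lt_of_le ht.2 hy.2.le⟩
        exact (hderiv t htI).hasDerivWithinAt)
    exact this y (Set.right_mem_Icc.mpr hxy)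
  -- hence g agrees with the constant g (1/2) on Ioo, and by continuity on Icc
  have hhalf : (1/2 : ℝ) ∈ Set.Ioo (0:ℝ) 1 := by norm_num
  have heq : Set.EqOn g (fun _ => g (1/2)) (Set.Icc 0 1) := by
    have heqIoo : Set.EqOn g (fun _ => g (1/2)) (Set.Ioo 0 1) := by
      intro x hx
      rcases le_total x (1/2) with h | h
      · exact (hconst x hx _ hhalf h).symm ▸ rfl
      · exact hconst _ hhalf x hx h
    have hcl : closure (Set.Ioo (0:ℝ) 1) = Set.Icc 0 1 := closure_Ioo (by norm_num)
    exact heqIoo.of_subset_closure hgc continuousOn_const Set.Ioo_subset_Icc_self hcl.ge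
  have h0 : g 0 = g (1/2) := heq (by norm_num)
  have h1 : g 1 = g (1/2) := heq (by norm_num)
  have hg01 : g 0 = g 1 := h0.trans h1.symm
  -- now the sign argument
  have hu0 : 0 < u 0 := hpos 0 (by norm_num)
  have hu1 : 0 < u 1 := hpos 1 (by norm_num)
  rcases le_total (u 0) (u 1) with h | h
  · have hlt0 : u 0 < 1 := by simpa [min_eq_left h] using hmin
    have hlt1 : 1 < u 1 := by simpa [max_eq_right h] using hmax
    -- -g 0 = lam * r0 * u0 * (1 - u0) < 0, so g 0 > 0
    have hA : lam * r0 * u 0 * (1 - u 0) < 0 := by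
      have : lam * r0 < 0 := mul_neg_of_pos_of_neg hlam hr0
      have h2 : lam * r0 * u 0 < 0 := mul_neg_of_neg_of_pos this hu0
      exact mul_neg_of_neg_of_pos h2 (by linarith)
    have hB : lam * r1 * u 1 * (1 - u 1) < 0 := by
      have h2 : 0 < lam * r1 * u 1 := by positivity
      exact mul_neg_of_pos_of_neg h2 (by linarith)
    rw [← hb0] at hA
    rw [← hb1] at hB
    rw [hg01] at hA
    simp only [hg] at hA hB
    linarith
  · have hlt1 : u 1 < 1 := by simpa [min_eq_right h] using hmin
    have hlt0 : 1 < u 0 := by simpa [max_eq_left h] using hmax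
    have hA : 0 < lam * r0 * u 0 * (1 - u 0) := by
      have h1 : lam * r0 < 0 := mul_neg_of_pos_of_neg hlam hr0
      have h2 : lam * r0 * u 0 < 0 := mul_neg_of_neg_of_pos h1 hu0
      exact mul_pos_of_neg_of_neg h2 (by linarith)
    have hB : 0 < lam * r1 * u 1 * (1 - u 1) := by
      have h2 : 0 < lam * r1 * u 1 := by positivity
      exact mul_pos h2 (by linarith)
    rw [← hb0] at hA
    rw [← hb1] at hB
    rw [hg01] at hA
    simp only [hg] at hA hB
    linarith
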